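/- For any matrix A ∈ ℝ^{p×p} and any ε > 0, A can be written as a finite sum A = Σ_i a_i · u_i ⊗ v_i where each u_i and each v_i is an s-sparse vector with unit Euclidean norm and Σ_i |a_i| ≤ ‖A‖_{Γ_s} + ε. (For rank-one A the decomposition achieves Σ_i |a_i| ≤ θ_s of its factors.) -/

import Mathlib

open MeasureTheory ProbabilityTheory Finset

noncomputable section

/-- Vectors in ℝ^p. -/
abbrev Vec (p : ℕ) := Fin p → ℝ

/-- p × p real matrices. -/
abbrev Mat (p : ℕ) := Matrix (Fin p) (Fin p) ℝ

/-- Euclidean (ℓ2) norm. -/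
def l2 {p : ℕ} (u : Vec p) : ℝ := Real.sqrt (∑ i, (u i) ^ 2)

/-- ℓ1 norm. -/
def l1 {p : ℕ} (u : Vec p) : ℝ := ∑ i, |u i|

/-- Euclidean inner product. -/
def dotp {p : ℕ} (u v : Vec p) : ℝ := ∑ i, u i * v i

/-- θ_s(u,v) = (‖u‖₂ + s^{-1/2}‖u‖₁)(‖v‖₂ + s^{-1/2}‖v‖₁). -/
def theta {p : ℕ} (s : ℝ) (u v : Vec p) : ℝ :=
  (l2 u + (Real.sqrt s)⁻¹ * l1 u) * (l2 v + (Real.sqrt s)⁻¹ * l1 v)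

/-- Frobenius (Hilbert–Schmidt) inner product. -/
def frob {p : ℕ} (A B : Mat p) : ℝ := ∑ i, ∑ j, A i j * B i j

/-- Frobenius norm. -/
def frobNorm {p : ℕ} (A : Mat p) : ℝ := Real.sqrt (frob A A)

/-- The mixed atomic norm ‖B‖_{Γ_s}. -/
def mixedNorm {p : ℕ} (s : ℝ) (B : Mat p) : ℝ :=
  sInf { t | ∃ (K : ℕ) (u v : Fin K → Vec p),
    B = ∑ k, Matrix.vecMulVec (u k) (v k) ∧ t = ∑ k, theta s (u k) (v k) }

/-- Dual norm of the mixed atomic norm. -/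
def dualMixedNorm {p : ℕ} (s : ℝ) (Z : Mat p) : ℝ :=
  sSup { t | ∃ B : Mat p, mixedNorm s B ≤ 1 ∧ t = frob Z B }

/-- A vector is `s`-sparse if it has at most `s` nonzero entries. -/
def IsSparse {p : ℕ} (s : ℕ) (u : Vec p) : Prop := {i | u i ≠ 0}.ncard ≤ s

/-- Nuclear norm of a real matrix: the sum of its singular values. -/
def nuclearNorm {p : ℕ} (A : Mat p) : ℝ :=
  ∑ i, Real.sqrt ((Matrix.isHermitian_conjTranspose_mul_self A).eigenvalues i)

/-- Operator (spectral) norm of a real matrix. -/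
def opNorm {p : ℕ} (A : Mat p) : ℝ :=
  sSup { t | ∃ u v : Vec p, l2 u ≤ 1 ∧ l2 v ≤ 1 ∧ t = dotp (A.mulVec u) v }

/-- `X` has sub-Gaussian (ψ₂) norm at most `K`: `E exp(X²/K²) ≤ 2`. -/
def HasSubgaussianNorm {Ω : Type*} [MeasurableSpace Ω] (μ : Measure Ω) (X : Ω → ℝ) (K : ℝ) :
    Prop := ∫ ω, Real.exp ((X ω) ^ 2 / K ^ 2) ∂μ ≤ 2

/-- `W` is a subgradient of the mixed atomic norm `‖·‖_{Γ_s}` at `B`. -/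
def InSubdiff {p : ℕ} (s : ℝ) (W B : Mat p) : Prop :=
  ∀ C : Mat p, mixedNorm s B + frob W (C - B) ≤ mixedNorm s C

/-! A vector `x` is split into blocks of `s` coordinates in decreasing order of `|x i|`. Every
coordinate of a block is at most the mean `‖x_T‖₁ / s` of the previous block `T`, so the next
block has `‖·‖₂ ≤ √s · ‖x_T‖₁ / s = s^{-1/2} ‖x_T‖₁`. Normalising the blocks therefore writes `x`
as a combination of `s`-sparse unit vectors with weight `‖x‖₂ + s^{-1/2} ‖x‖₁`. Tensoring such
decompositions of `u` and `v` decomposes `u ⊗ v` with weight `θ_s(u, v)`, and summing over a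
near-optimal decomposition in the definition of `‖A‖_{Γ_s}` gives the general case. -/

open Matrix

theorem Finset.exists_subset_card_eq_forall_le {α β : Type*} [LinearOrder β] (f : α → β) :
    ∀ {k : ℕ} {F : Finset α}, k ≤ F.card →
      ∃ T ⊆ F, T.card = k ∧ ∀ i ∈ F, i ∉ T → ∀ j ∈ T, f i ≤ f j
  | 0, _, _ => ⟨∅, empty_subset _, rfl, by simp⟩
  | k + 1, F, hk => by
    classical
    obtain ⟨a, haF, hmax⟩ := F.exists_max_image f (card_pos.1 (by omega))
    obtain ⟨T, hTF, hTcard, htop⟩ :=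
      exists_subset_card_eq_forall_le f (k := k) (F := F.erase a)
        (by rw [card_erase_of_mem haF]; omega)
    have haT : a ∉ T := fun h => (mem_erase.1 (hTF h)).1 rfl
    refine ⟨insert a T, insert_subset haF (hTF.trans (erase_subset _ _)), by
      rw [card_insert_of_notMem haT, hTcard], fun i hiF hiT j hj => ?_⟩
    rcases mem_insert.1 hj with rfl | hj
    · exact hmax i hiF
    · exact htop i (mem_erase.2 ⟨fun h => hiT (h ▸ mem_insert_self _ _), hiF⟩)
        (fun h => hiT (mem_insert_of_mem h)) j hj

section

variable {E : Type*} [AddCommMonoid E] [Module ℝ E]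

def HasAtomicDecomp (S : Set E) (x : E) (r : ℝ) : Prop :=
  ∃ (K : ℕ) (c : Fin K → ℝ) (w : Fin K → E),
    x = ∑ k, c k • w k ∧ (∀ k, w k ∈ S) ∧ ∑ k, |c k| ≤ r

namespace HasAtomicDecomp

variable {S : Set E} {x y : E} {r r' : ℝ}

theorem mono (h : HasAtomicDecomp S x r) (hr : r ≤ r') : HasAtomicDecomp S x r' :=
  let ⟨K, c, w, hx, hw, hc⟩ := h
  ⟨K, c, w, hx, hw, hc.trans hr⟩

theorem zero (hr : 0 ≤ r) : HasAtomicDecomp S 0 r :=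
  ⟨0, ![], ![], by simp, fun k => k.elim0, by simpa using hr⟩

theorem smul_mem {w : E} (hw : w ∈ S) (c : ℝ) : HasAtomicDecomp S (c • w) |c| :=
  ⟨1, ![c], ![w], by simp, fun k => by fin_cases k; exact hw, by simp⟩

theorem add (hx : HasAtomicDecomp S x r) (hy : HasAtomicDecomp S y r') :
    HasAtomicDecomp S (x + y) (r + r') := by
  obtain ⟨K, c, w, rfl, hw, hc⟩ := hx
  obtain ⟨L, d, z, rfl, hz, hd⟩ := hy
  refine ⟨K + L, Fin.append c d, Fin.append w z, by simp [Fin.sum_univ_add],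
    Fin.addCases (by simpa using hw) (by simpa using hz), ?_⟩
  simpa [Fin.sum_univ_add] using add_le_add hc hd

theorem smul (h : HasAtomicDecomp S x r) (a : ℝ) : HasAtomicDecomp S (a • x) (|a| * r) := by
  obtain ⟨K, c, w, rfl, hw, hc⟩ := h
  refine ⟨K, a • c, w, by simp [Finset.smul_sum, smul_smul], hw, ?_⟩
  simpa [abs_mul, ← Finset.mul_sum] using mul_le_mul_of_nonneg_left hc (abs_nonneg a)

theorem sum {ι : Type*} {t : Finset ι} {f : ι → E} {r : ι → ℝ}
    (h : ∀ i ∈ t, HasAtomicDecomp S (f i) (r i)) :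
    HasAtomicDecomp S (∑ i ∈ t, f i) (∑ i ∈ t, r i) := by
  classical
  induction t using Finset.induction_on with
  | empty => simpa using zero le_rfl
  | insert i t hi ih =>
    rw [sum_insert hi, sum_insert hi]
    exact (h i (mem_insert_self _ _)).add (ih fun j hj => h j (mem_insert_of_mem hj))

theorem map₂ {F G : Type*} [AddCommMonoid F] [Module ℝ F] [AddCommMonoid G] [Module ℝ G]
    {T : Set F} {U : Set G} (B : E →ₗ[ℝ] F →ₗ[ℝ] G) (hB : ∀ w ∈ S, ∀ z ∈ T, B w z ∈ U)
    {y : F} (hx : HasAtomicDecomp S x r) (hy : HasAtomicDecomp T y r') :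
    HasAtomicDecomp U (B x y) (r * r') := by
  obtain ⟨K, c, w, rfl, hw, hc⟩ := hx
  obtain ⟨L, d, z, rfl, hz, hd⟩ := hy
  have hrow (k : Fin K) : HasAtomicDecomp U (B (w k) (∑ l, d l • z l)) (∑ l, |d l|) := by
    simpa using sum fun l _ => smul_mem (hB _ (hw k) _ (hz l)) (d l)
  rw [map_sum B, LinearMap.sum_apply]
  simp only [map_smul, LinearMap.smul_apply]
  refine (sum fun k _ => (hrow k).smul (c k)).mono ?_
  rw [← Finset.sum_mul]
  exact mul_le_mul hc hd (sum_nonneg fun _ _ => abs_nonneg _)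
    ((sum_nonneg fun _ _ => abs_nonneg _).trans hc)

end HasAtomicDecomp

end

section SparseVectors

variable {p s : ℕ}

def sparseSphere (p s : ℕ) : Set (Vec p) := {u | IsSparse s u ∧ l2 u = 1}

theorem l1_nonneg (x : Vec p) : 0 ≤ l1 x := sum_nonneg fun _ _ => abs_nonneg _

theorem abs_le_l1 (x : Vec p) (i : Fin p) : |x i| ≤ l1 x :=
  single_le_sum (f := fun j => |x j|) (fun _ _ => abs_nonneg _) (mem_univ i)

theorem l2_eq_norm (x : Vec p) : l2 x = ‖(WithLp.toLp 2 x : EuclideanSpace ℝ (Fin p))‖ := by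
  simp [l2, EuclideanSpace.norm_eq]

theorem l2_nonneg (x : Vec p) : 0 ≤ l2 x := Real.sqrt_nonneg _

theorem l2_smul (c : ℝ) (x : Vec p) : l2 (c • x) = |c| * l2 x := by
  rw [l2_eq_norm, l2_eq_norm, WithLp.toLp_smul, norm_smul, Real.norm_eq_abs]

theorem l2_pos {x : Vec p} (hx : x ≠ 0) : 0 < l2 x := by
  rw [l2_eq_norm]
  exact norm_pos_iff.2 fun h => hx (by simpa using h)

theorem l2_indicator_le (T : Set (Fin p)) (x : Vec p) : l2 (T.indicator x) ≤ l2 x :=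
  Real.sqrt_le_sqrt (sum_le_sum fun i _ => by by_cases h : i ∈ T <;> simp [h, sq_nonneg])

theorem l2_le_sqrt_card_mul {T : Finset (Fin p)} {x : Vec p} {M : ℝ} (hx : ∀ i ∉ T, x i = 0)
    (hM : 0 ≤ M) (hxM : ∀ i, |x i| ≤ M) : l2 x ≤ √T.card * M := by
  have hsq : ∑ i, x i ^ 2 ≤ T.card * M ^ 2 := calc
    ∑ i, x i ^ 2 = ∑ i ∈ T, x i ^ 2 :=
      (sum_subset (subset_univ T) fun i _ hi => by simp [hx i hi]).symm
    _ ≤ T.card • M ^ 2 := sum_le_card_nsmul _ _ _ fun i _ => by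
      simpa [sq_abs] using pow_le_pow_left₀ (abs_nonneg _) (hxM i) 2
    _ = T.card * M ^ 2 := nsmul_eq_mul _ _
  calc l2 x ≤ √(T.card * M ^ 2) := Real.sqrt_le_sqrt hsq
    _ = √T.card * M := by rw [Real.sqrt_mul (Nat.cast_nonneg _), Real.sqrt_sq hM]

theorem l1_indicator (T : Finset (Fin p)) (x : Vec p) :
    l1 ((T : Set (Fin p)).indicator x) = ∑ i ∈ T, |x i| := by
  simp [l1, Set.indicator_apply, apply_ite, sum_ite_mem]

theorem l1_indicator_add_compl (T : Set (Fin p)) (x : Vec p) :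
    l1 (T.indicator x) + l1 (Tᶜ.indicator x) = l1 x := by
  rw [l1, l1, l1, ← sum_add_distrib]
  congr with i
  by_cases h : i ∈ T <;> simp [h]

theorem isSparse_of_forall_notMem {T : Finset (Fin p)} {x : Vec p} (hx : ∀ i ∉ T, x i = 0)
    (hT : T.card ≤ s) : IsSparse s x :=
  (Set.ncard_le_ncard (show {i | x i ≠ 0} ⊆ T from fun i hi => by_contra fun h => hi (hx i h))
    T.finite_toSet).trans (by rwa [Set.ncard_coe_finset])

theorem IsSparse.smul {x : Vec p} (hx : IsSparse s x) (c : ℝ) : IsSparse s (c • x) :=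
  (Set.ncard_le_ncard (Function.support_const_smul_subset c x) (Set.toFinite _)).trans hx

theorem hasAtomicDecomp_of_isSparse {x : Vec p} (hx : IsSparse s x) :
    HasAtomicDecomp (sparseSphere p s) x (l2 x) := by
  rcases eq_or_ne x 0 with rfl | hx0
  · exact HasAtomicDecomp.zero (l2_nonneg 0)
  have hpos := l2_pos hx0
  have hunit : (l2 x)⁻¹ • x ∈ sparseSphere p s :=
    ⟨hx.smul _, by rw [l2_smul, abs_inv, abs_of_pos hpos, inv_mul_cancel₀ hpos.ne']⟩
  simpa [smul_smul, hpos.ne', abs_of_pos hpos] using HasAtomicDecomp.smul_mem hunit (l2 x)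

/-- `M` bounds the coordinates not yet peeled off; the term `√s * M` lets each block be paid for
by the `ℓ₁` mass of the block before it. -/
theorem hasAtomicDecomp_of_forall_notMem (hs : 0 < s) (F : Finset (Fin p)) :
    ∀ x : Vec p, (∀ i ∉ F, x i = 0) → ∀ M, 0 ≤ M → (∀ i, |x i| ≤ M) →
      HasAtomicDecomp (sparseSphere p s) x (min (l2 x) (√s * M) + (√s)⁻¹ * l1 x) := by
  induction F using Finset.strongInduction with
  | H F ih =>
  intro x hxF M hM hxM
  by_cases hF : F.card ≤ s
  · have hl2 : l2 x ≤ √s * M := (l2_le_sqrt_card_mul hxF hM hxM).trans (by gcongr)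
    refine (hasAtomicDecomp_of_isSparse (isSparse_of_forall_notMem hxF hF)).mono ?_
    exact le_add_of_le_of_nonneg (le_min le_rfl hl2) (mul_nonneg (by positivity) (l1_nonneg x))
  obtain ⟨T, hTF, hTcard, htop⟩ :=
    Finset.exists_subset_card_eq_forall_le (fun i => |x i|) (not_le.1 hF).le
  let y := (T : Set (Fin p)).indicator x
  let z := (T : Set (Fin p))ᶜ.indicator x
  have hy : HasAtomicDecomp (sparseSphere p s) y (l2 y) :=
    hasAtomicDecomp_of_isSparse <| isSparse_of_forall_notMem (T := T)
      (fun i hi => Set.indicator_of_notMem (mem_coe.not.2 hi) x) hTcard.le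
  have hl2y : l2 y ≤ min (l2 x) (√s * M) := by
    refine le_min (l2_indicator_le _ x) (hTcard ▸ l2_le_sqrt_card_mul
      (fun i hi => Set.indicator_of_notMem (mem_coe.not.2 hi) x) hM fun i => ?_)
    by_cases hi : i ∈ T <;> simp [y, hi, hxM i, hM]
  have hzM (i : Fin p) : |z i| ≤ l1 y / s := by
    rw [le_div_iff₀ (Nat.cast_pos.2 hs), l1_indicator, ← hTcard]
    by_cases hiT : i ∈ T
    · simp [z, hiT, sum_nonneg]
    by_cases hiF : i ∈ F
    · simpa [z, hiT, mul_comm] using card_nsmul_le_sum T _ _ (htop i hiF hiT)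
    · simp [z, hiT, hxF i hiF, sum_nonneg]
  have hz : HasAtomicDecomp (sparseSphere p s) z ((√s)⁻¹ * l1 y + (√s)⁻¹ * l1 z) := by
    have hTne : T.Nonempty := card_pos.1 (hTcard ▸ hs)
    refine (ih (F \ T) (sdiff_ssubset hTF hTne) z (fun i hi => ?_) _
      (by have := l1_nonneg y; positivity) hzM).mono ?_
    · by_cases hiT : i ∈ T
      · simp [z, hiT]
      · simp [z, hiT, hxF i (by simpa [hiT] using hi)]
    · have : √(s : ℝ) * (l1 y / s) = (√s)⁻¹ * l1 y := by
        rw [← one_div, ← Real.sqrt_div_self']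
        ring
      linarith [min_le_right (l2 z) (√s * (l1 y / s))]
  have hxyz : y + z = x := Set.indicator_self_add_compl _ x
  have hl1 : l1 y + l1 z = l1 x := l1_indicator_add_compl _ x
  nth_rw 1 [← hxyz]
  refine (hy.add hz).mono ?_
  rw [← hl1, mul_add]
  linarith

theorem hasAtomicDecomp_sparseSphere (hs : 0 < s) (x : Vec p) :
    HasAtomicDecomp (sparseSphere p s) x (l2 x + (√s)⁻¹ * l1 x) :=
  (hasAtomicDecomp_of_forall_notMem hs univ x (fun i hi => absurd (mem_univ i) hi) (l1 x)
    (l1_nonneg x) (abs_le_l1 x)).mono (by gcongr; exact min_le_left _ _)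

end SparseVectors

theorem hasAtomicDecomp_vecMulVec {p s : ℕ} (hs : 0 < s) (x y : Vec p) :
    HasAtomicDecomp (Set.image2 vecMulVec (sparseSphere p s) (sparseSphere p s))
      (vecMulVec x y) (theta s x y) :=
  (hasAtomicDecomp_sparseSphere hs x).map₂ (vecMulVecBilin ℝ ℝ) (U := Set.image2 vecMulVec _ _)
    (fun _ hu _ hv => Set.mem_image2_of_mem hu hv) (hasAtomicDecomp_sparseSphere hs y)

theorem exists_sum_vecMulVec_lt_mixedNorm_add {p : ℕ} (s : ℝ) (A : Mat p) {ε : ℝ} (hε : 0 < ε) :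
    ∃ (K : ℕ) (u v : Fin K → Vec p),
      A = ∑ k, vecMulVec (u k) (v k) ∧ ∑ k, theta s (u k) (v k) < mixedNorm s A + ε := by
  have hrows : A = ∑ i, vecMulVec (Pi.single i 1) (fun j => A i j) := by
    ext i j
    simp [Matrix.sum_apply, vecMulVec_apply, Pi.single_apply]
  unfold mixedNorm
  obtain ⟨_, ⟨K, u, v, hA, rfl⟩, hlt⟩ := Real.lt_sInf_add_pos (Set.nonempty_of_mem
    (show _ ∈ {t | ∃ (K : ℕ) (u v : Fin K → Vec p),
      A = ∑ k, vecMulVec (u k) (v k) ∧ t = ∑ k, theta s (u k) (v k)} from ⟨p, _, _, hrows, rfl⟩)) hε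
  exact ⟨K, u, v, hA, hlt⟩

theorem HasAtomicDecomp.exists_sparse_rankOne {p s : ℕ} {A : Mat p} {r : ℝ}
    (h : HasAtomicDecomp (Set.image2 vecMulVec (sparseSphere p s) (sparseSphere p s)) A r) :
    ∃ (K : ℕ) (a : Fin K → ℝ) (u v : Fin K → Vec p),
      A = ∑ k, a k • vecMulVec (u k) (v k) ∧
      (∀ k, IsSparse s (u k) ∧ l2 (u k) = 1 ∧ IsSparse s (v k) ∧ l2 (v k) = 1) ∧
      ∑ k, |a k| ≤ r := by
  obtain ⟨K, a, W, rfl, hW, hr⟩ := h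
  choose u hu v hv huv using hW
  exact ⟨K, a, u, v, by simp [huv], fun k => ⟨(hu k).1, (hu k).2, (hv k).1, (hv k).2⟩, hr⟩

/-- Lemma A.1, decomposition part. Any matrix decomposes into s-sparse unit-norm
rank-one atoms with total weight at most `‖A‖_{Γ_s} + ε`; for a rank-one matrix `x ⊗ y` the
weight can be taken at most `θ_s(x,y)`. -/
theorem atomic_decomposition {p s : ℕ} (hs : 0 < s) :
    (∀ (A : Mat p) (ε : ℝ), 0 < ε →
      ∃ (K : ℕ) (a : Fin K → ℝ) (u v : Fin K → Vec p),
        A = ∑ k, a k • Matrix.vecMulVec (u k) (v k) ∧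
        (∀ k, IsSparse s (u k) ∧ l2 (u k) = 1 ∧ IsSparse s (v k) ∧ l2 (v k) = 1) ∧
        ∑ k, |a k| ≤ mixedNorm (s : ℝ) A + ε) ∧
    (∀ x y : Vec p,
      ∃ (K : ℕ) (a : Fin K → ℝ) (u v : Fin K → Vec p),
        Matrix.vecMulVec x y = ∑ k, a k • Matrix.vecMulVec (u k) (v k) ∧
        (∀ k, IsSparse s (u k) ∧ l2 (u k) = 1 ∧ IsSparse s (v k) ∧ l2 (v k) = 1) ∧
        ∑ k, |a k| ≤ theta (s : ℝ) x y) := by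
  refine ⟨fun A ε hε => ?_, fun x y => (hasAtomicDecomp_vecMulVec hs x y).exists_sparse_rankOne⟩
  obtain ⟨K, u, v, rfl, hlt⟩ := exists_sum_vecMulVec_lt_mixedNorm_add s A hε
  have hsum := HasAtomicDecomp.sum fun k (_ : k ∈ univ) => hasAtomicDecomp_vecMulVec hs (u k) (v k)
  exact (hsum.mono hlt.le).exists_sparse_rankOne
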